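/- arXiv:1806.00517 — 6 statements merged into one kernel-verified Lean document; each statement's English description precedes it below -/
import Mathlib

section
/- Let p and N be primes with p odd and p dividing N − 1. Then the polynomial X^p − N has a root in the N-th cyclotomic extension of the field ℚ_N of N-adic numbers; that is, there exists an element x of the N-th cyclotomic field over ℚ_N with x^p = N. -/
/-!
Over any field containing a primitive `N`-th root of unity `ζ`,
`N = ∏_{k=1}^{N-1} (1 - ζ^k) = (1 - ζ)^(N-1) U` with `U = ∏_k (1 + ζ + ⋯ + ζ^(k-1))`,
so since `p ∣ N - 1` it suffices that `U` is a `p`-th power. This already holds in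
`ℤ_N[X]/(Φ_N)`, which is `N`-adically complete (it is free of finite rank over `ℤ_N`), so by
Hensel's lemma a `p`-th root of `U` modulo `N` is enough. Modulo `N`, `ζ - 1` is nilpotent
and `U ≡ (N-1)! ≡ -1` modulo `ζ - 1` by Wilson's theorem; thus `-U` is unipotent in a ring of
characteristic `N`, so its order is a power of `N`, prime to `p`, and it is a `p`-th power.
As `p` is odd, so is `U`.
-/

open Polynomial Finset

namespace IsAdicComplete

variable {R : Type*} [CommRing R] {I : Ideal R}

theorem of_linearEquiv {M M' : Type*} [AddCommGroup M] [Module R M] [AddCommGroup M']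
    [Module R M'] [IsAdicComplete I M] (e : M ≃ₗ[R] M') : IsAdicComplete I M' := by
  rw [← AdicCompletion.of_bijective_iff]
  have h : AdicCompletion.of I M' = AdicCompletion.congr I e ∘ AdicCompletion.of I M ∘ e.symm := by
    ext x
    simp [AdicCompletion.map_of]
  rw [h]
  exact (AdicCompletion.congr I e).bijective.comp
    ((AdicCompletion.of_bijective I M).comp e.symm.bijective)

instance pi {ι : Type*} [Finite ι] (M : ι → Type*) [∀ i, AddCommGroup (M i)]
    [∀ i, Module R (M i)] [∀ i, IsAdicComplete I (M i)] : IsAdicComplete I (∀ i, M i) := by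
  classical
  have := Fintype.ofFinite ι
  rw [← AdicCompletion.of_bijective_iff]
  have h : AdicCompletion.of I (∀ i, M i) = (AdicCompletion.piEquivOfFintype I M).symm ∘
      Pi.map fun i ↦ AdicCompletion.of I (M i) := by
    ext x : 1
    rw [Function.comp_apply, LinearEquiv.eq_symm_apply, AdicCompletion.piEquivOfFintype_apply]
    ext i : 1
    simp only [AdicCompletion.pi, LinearMap.pi_apply, AdicCompletion.map_of, LinearMap.proj_apply,
      Pi.map_apply]
  rw [h]
  exact (AdicCompletion.piEquivOfFintype I M).symm.bijective.comp
    (Function.Bijective.piMap fun i ↦ AdicCompletion.of_bijective I (M i))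

theorem of_basis {ι M : Type*} [Finite ι] [AddCommGroup M] [Module R M] [IsAdicComplete I R]
    (b : Module.Basis ι R M) : IsAdicComplete I M :=
  have := Fintype.ofFinite ι
  of_linearEquiv b.equivFun.symm

theorem map_algebraMap_of_basis {ι S : Type*} [Finite ι] [CommRing S] [Algebra R S]
    [IsAdicComplete I R] (b : Module.Basis ι R S) :
    IsAdicComplete (I.map (algebraMap R S)) S :=
  (map_algebraMap_iff I S).mpr (of_basis b)

end IsAdicComplete

theorem HenselianRing.exists_pow_eq {R : Type*} [CommRing R] {I : Ideal R} [HenselianRing R I]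
    {n : ℕ} (hn : n ≠ 0) {a₀ u : R}
    (ha₀ : Ideal.Quotient.mk I (a₀ ^ n) = Ideal.Quotient.mk I u)
    (hu : IsUnit (Ideal.Quotient.mk I u)) (hnI : IsUnit (n : R ⧸ I)) : ∃ a : R, a ^ n = u := by
  have ha₀_unit : IsUnit (Ideal.Quotient.mk I a₀) := by
    rwa [← isUnit_pow_iff hn, ← map_pow, ha₀]
  obtain ⟨a, ha, -⟩ := HenselianRing.is_henselian (I := I) (X ^ n - C u)
    (monic_X_pow_sub_C u hn) a₀
    (by rw [← Ideal.Quotient.eq_zero_iff_mem]; simp [ha₀])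
    (by simpa [derivative_X_pow] using ⟨hnI, ha₀_unit.pow (n - 1)⟩)
  exact ⟨a, by simpa [sub_eq_zero] using ha⟩

theorem exists_pow_eq_of_isNilpotent_sub_one {Q : Type*} [CommRing Q] {q : ℕ} [Fact q.Prime]
    [CharP Q q] {u : Q} (hu : IsNilpotent (u - 1)) {n : ℕ} (hn : n.Coprime q) :
    ∃ v : Q, v ^ n = u := by
  obtain ⟨k, hk⟩ := hu
  have hpow : u ^ q ^ k = 1 := by
    rw [← sub_eq_zero, ← one_pow (q ^ k), ← sub_pow_char_pow]
    exact pow_eq_zero_of_le (Nat.lt_pow_self (Fact.out : q.Prime).one_lt).le hk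
  have hcop : n.Coprime (orderOf u) :=
    (hn.pow_right k).coprime_dvd_right (orderOf_dvd_of_pow_eq_one hpow)
  obtain ⟨m, hm⟩ := exists_pow_eq_self_of_coprime hcop
  exact ⟨u ^ m, by rw [← pow_mul, mul_comm, pow_mul, hm]⟩

theorem prod_one_sub_pow_succ_eq_pow_mul_prod_geom_sum {R : Type*} [CommRing R] (x : R) (n : ℕ) :
    ∏ k ∈ range n, (1 - x ^ (k + 1)) =
      (1 - x) ^ n * ∏ k ∈ range n, ∑ i ∈ range (k + 1), x ^ i := by
  rw [← card_range n, ← prod_const, card_range, ← prod_mul_distrib]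
  exact prod_congr rfl fun k _ ↦ (mul_neg_geom_sum x (k + 1)).symm

theorem Ideal.Quotient.mk_prod_geom_sum {R : Type*} [CommRing R] (x : R) (n : ℕ) :
    Ideal.Quotient.mk (Ideal.span {x - 1}) (∏ k ∈ range n, ∑ i ∈ range (k + 1), x ^ i) =
      (n.factorial : R ⧸ Ideal.span {x - 1}) := by
  have hx : Ideal.Quotient.mk (Ideal.span {x - 1}) x = 1 := by
    rw [← sub_eq_zero, ← map_one (Ideal.Quotient.mk _), ← map_sub,
      Ideal.Quotient.eq_zero_iff_mem]
    exact Ideal.mem_span_singleton_self _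
  simp only [map_prod, map_sum, map_pow, hx, one_pow, sum_const, card_range, nsmul_one]
  rw [← prod_range_add_one_eq_factorial, Nat.cast_prod]

theorem isNilpotent_neg_prod_geom_sum_sub_one {Q : Type*} [CommRing Q] {N : ℕ} [Fact N.Prime]
    [CharP Q N] {ζ : Q} (hζ : ζ ^ N = 1) :
    IsNilpotent (-∏ k ∈ range (N - 1), ∑ i ∈ range (k + 1), ζ ^ i - 1) := by
  have hwilson : ((N - 1).factorial : Q) = -1 := by
    have := congrArg (ZMod.castHom dvd_rfl Q) (ZMod.wilsons_lemma (p := N))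
    rwa [map_natCast, map_neg, map_one] at this
  have hmem : -∏ k ∈ range (N - 1), ∑ i ∈ range (k + 1), ζ ^ i - 1 ∈ Ideal.span {ζ - 1} := by
    rw [← Ideal.Quotient.eq_zero_iff_mem, map_sub, map_neg, map_one,
      Ideal.Quotient.mk_prod_geom_sum, ← map_natCast (Ideal.Quotient.mk _), hwilson, map_neg,
      map_one, neg_neg, sub_self]
  have hζ_sub_one : (ζ - 1) ^ N = 0 := by
    rw [sub_pow_char, one_pow, hζ, sub_self]
  obtain ⟨c, hc⟩ := Ideal.mem_span_singleton'.mp hmem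
  exact ⟨N, by rw [← hc, mul_pow, hζ_sub_one, mul_zero]⟩

theorem exists_pow_eq_prod_geom_sum {R : Type*} [CommRing R] {N : ℕ} [Fact N.Prime]
    [HenselianRing R (Ideal.span {(N : R)})] (hN : Ideal.span {(N : R)} ≠ ⊤)
    {ρ : R} (hρ : ρ ^ N = 1) {p : ℕ} (hp : Odd p) (hpN : p.Coprime N) :
    ∃ a : R, a ^ p = ∏ k ∈ range (N - 1), ∑ i ∈ range (k + 1), ρ ^ i := by
  set I := Ideal.span {(N : R)}
  have : Nontrivial (R ⧸ I) := Ideal.Quotient.nontrivial_iff.mpr hN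
  have : CharP (R ⧸ I) N := (CharP.charP_iff_prime_eq_zero Fact.out).mpr <| by
    rw [← map_natCast (Ideal.Quotient.mk I), Ideal.Quotient.eq_zero_iff_mem]
    exact Ideal.mem_span_singleton_self _
  have hnil := isNilpotent_neg_prod_geom_sum_sub_one (Q := R ⧸ I)
    (ζ := Ideal.Quotient.mk I ρ) (by rw [← map_pow, hρ, map_one])
  simp only [← map_pow, ← map_sum, ← map_prod] at hnil
  obtain ⟨v, hv⟩ := exists_pow_eq_of_isNilpotent_sub_one hnil hpN
  obtain ⟨a₀, ha₀⟩ := Ideal.Quotient.mk_surjective (-v)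
  refine HenselianRing.exists_pow_eq (I := I) hp.pos.ne' (a₀ := a₀) ?_ ?_ ?_
  · rw [map_pow, ha₀, hp.neg_pow, hv, neg_neg]
  · simpa using hnil.isUnit_add_one
  · simpa using (ZMod.unitOfCoprime p hpN).isUnit.map (ZMod.castHom dvd_rfl (R ⧸ I))

namespace AdjoinRoot

theorem isAdicComplete_span_natCast {N : ℕ} [Fact N.Prime] {f : ℤ_[N][X]} (hf : f.Monic) :
    IsAdicComplete (Ideal.span {(N : AdjoinRoot f)}) (AdjoinRoot f) := by
  have := IsAdicComplete.map_algebraMap_of_basis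
    (I := IsLocalRing.maximalIdeal ℤ_[N]) (powerBasis' hf).basis
  rwa [PadicInt.maximalIdeal_eq_span_p, Ideal.map_span, Set.image_singleton,
    map_natCast] at this

theorem span_natCast_ne_top_cyclotomic (N : ℕ) [Fact N.Prime] :
    Ideal.span {(N : AdjoinRoot (cyclotomic N ℤ_[N]))} ≠ ⊤ := by
  have hroot : (cyclotomic N ℤ_[N]).eval₂ PadicInt.toZMod 1 = 0 := by
    rw [eval₂_eq_eval_map, map_cyclotomic, eval_one_cyclotomic_prime, ZMod.natCast_self]
  rw [Ne, Ideal.span_singleton_eq_top]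
  intro hunit
  simpa using hunit.map (lift PadicInt.toZMod 1 hroot)

theorem root_cyclotomic_pow_eq_one (n : ℕ) (A : Type*) [CommRing A] :
    root (cyclotomic n A) ^ n = 1 := by
  rw [← sub_eq_zero, ← mk_X, ← map_pow, ← map_one (mk _), ← map_sub, mk_eq_zero]
  exact cyclotomic.dvd_X_pow_sub_one n A

end AdjoinRoot

theorem statement9_general (p N : ℕ) (hpodd : Odd p) [hN : Fact N.Prime]
    (hdvd : p ∣ N - 1) :
    ∃ x : CyclotomicField N ℚ_[N],
      x ^ p = (N : CyclotomicField N ℚ_[N]) := by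
  have := AdjoinRoot.isAdicComplete_span_natCast (cyclotomic.monic N ℤ_[N])
  have hpN : p.Coprime N :=
    Nat.Coprime.coprime_dvd_left hdvd <| (Nat.coprime_self_sub_left hN.out.one_le).mpr <|
      Nat.coprime_one_left N
  obtain ⟨a, ha⟩ := exists_pow_eq_prod_geom_sum (AdjoinRoot.span_natCast_ne_top_cyclotomic N)
    (AdjoinRoot.root_cyclotomic_pow_eq_one N ℤ_[N]) hpodd hpN
  have : NeZero N := ⟨hN.out.ne_zero⟩
  set ζ := IsCyclotomicExtension.zeta N ℚ_[N] (CyclotomicField N ℚ_[N])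
  have hζ : IsPrimitiveRoot ζ N := IsCyclotomicExtension.zeta_spec _ _ _
  let φ := AdjoinRoot.lift ((algebraMap ℚ_[N] _).comp PadicInt.Coe.ringHom) ζ <| by
    rw [eval₂_eq_eval_map, map_cyclotomic]
    exact hζ.isRoot_cyclotomic hN.out.pos
  refine ⟨(1 - ζ) ^ ((N - 1) / p) * φ a, ?_⟩
  rw [mul_pow, ← pow_mul, Nat.div_mul_cancel hdvd, ← map_pow, ha, map_prod]
  have hφ : φ (AdjoinRoot.root _) = ζ := AdjoinRoot.lift_root _
  have hζ' : IsPrimitiveRoot ζ (N - 1 + 1) := by rwa [Nat.sub_add_cancel hN.out.one_le]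
  simp only [map_sum, map_pow, hφ]
  rw [← prod_one_sub_pow_succ_eq_pow_mul_prod_geom_sum, hζ'.prod_one_sub_pow_eq_order]
  exact_mod_cast Nat.sub_add_cancel hN.out.one_le

/-- For primes `p` (odd) and `N` with `p ∣ N - 1`, the polynomial `X^p - N` has a root
in the `N`-th cyclotomic extension of `ℚ_N`. -/
theorem statement9 (p N : ℕ) (hp : p.Prime) (hpodd : Odd p) [hN : Fact N.Prime]
    (hdvd : p ∣ N - 1) :
    ∃ x : CyclotomicField N ℚ_[N],
      x ^ p = (N : CyclotomicField N ℚ_[N]) :=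
  statement9_general p N hpodd (hN := hN) hdvd
end

section
/- Let p and N be primes with p odd and N ≡ 1 (mod p), and let i be odd with 1 ≤ i ≤ p−4. Then M_i · S_i is a p-th power in 𝔽_N^×; equivalently, as elements of 𝔽_N^×/(𝔽_N^×)^p one has S_i^{−1} = M_i. -/
open scoped TensorProduct

/-- The `p`-rank of a commutative group `G`, i.e. `dim_{𝔽_p}(G ⊗ 𝔽_p)`. -/
noncomputable def pRank (p : ℕ) (G : Type*) [CommGroup G] : ℕ :=
  Module.finrank (ZMod p) (ZMod p ⊗[ℤ] Additive G)

/-- The `p`-rank of the class group of the number field `K`. -/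
noncomputable def classRank (p : ℕ) (K : Type*) [Field K] : ℕ :=
  pRank p (ClassGroup (NumberField.RingOfIntegers K))

/-- `p` is a regular prime: `p` does not divide the class number of `ℚ(ζ_p)`. -/
def RegularPrime (p : ℕ+) : Prop :=
  ¬ (p : ℕ) ∣ Nat.card (ClassGroup (NumberField.RingOfIntegers (CyclotomicField p ℚ)))

/-- `M_i = ∏_{k=1}^{N-1} ∏_{a=1}^{k-1} k^{a^i}` as an element of `𝔽_N = ZMod N`. -/
def Mnum (N i : ℕ) : ZMod N :=
  ∏ k ∈ Finset.Icc 1 (N - 1), ∏ a ∈ Finset.Icc 1 (k - 1), (k : ZMod N) ^ (a ^ i)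

/-- `S_i = ∏_{k=1}^{p-1} ((Mk)!)^{k^i}` with `M = (N-1)/p`, as an element of `ZMod N`. -/
def Snum (p N i : ℕ) : ZMod N :=
  ∏ k ∈ Finset.Icc 1 (p - 1), (Nat.factorial ((N - 1) / p * k) : ZMod N) ^ (k ^ i)

/-- `A_m = ∏_{k=1}^{N-1} k^{k^m}` as an element of `ZMod N`. -/
def Anum (N m : ℕ) : ZMod N :=
  ∏ k ∈ Finset.Icc 1 (N - 1), (k : ZMod N) ^ (k ^ m)

/-- Merel's number `C = ∏_{k=1}^{(N-1)/2} k^k` as an element of `ZMod N`. -/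
def MerelC (N : ℕ) : ZMod N :=
  ∏ k ∈ Finset.Icc 1 ((N - 1) / 2), (k : ZMod N) ^ k

/-- `x` is a `p`-th power in `𝔽_N`. -/
def IsPthPow (p : ℕ) {N : ℕ} (x : ZMod N) : Prop :=
  ∃ y : ZMod N, y ^ p = x

/-! With `N = M p + 1`, an element `x ≠ 0` of `𝔽_N` is a `p`-th power iff `x ^ M = 1`, and
`χ j = j ^ M` is a character of order dividing `p`, so exponents of `χ` only matter modulo `p`.
Splitting `1, …, N - 1` into residue classes `p q + s + 1` mod `p`, the exponent of `p q + s + 1`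
in `M_i` is `∑_{a ≤ s} a ^ i` modulo `p`, since a power sum `∑ a ^ i` over `p` consecutive
integers vanishes mod `p` for `i < p - 1`. For `S_i`, cut `(M k)!` into the blocks
`M s + 1, …, M s + M`; as `M p ≡ -1 (mod N)`, the block `s` is `M ^ M ∏_q (p q + s + 1)`, and it
enters `S_i` with exponent `∑_{s < k < p} k ^ i`. The two exponents add up to
`∑_{0 < a < p} a ^ i ≡ 0`, and the powers of `M ^ M` collect into the exponent
`∑_{k < p} k ^ (i + 1) ≡ 0`. -/

open Finset Nat

theorem pow_eq_one_of_dvd {G : Type*} [Monoid G] {x : G} {p n : ℕ} (hx : x ^ p = 1)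
    (hn : p ∣ n) : x ^ n = 1 := by
  obtain ⟨c, rfl⟩ := hn
  rw [pow_mul, hx, one_pow]

theorem ZMod.sum_range_natCast {n : ℕ} [NeZero n] {M : Type*} [AddCommMonoid M]
    (f : ZMod n → M) : ∑ a ∈ range n, f a = ∑ x, f x :=
  sum_nbij' (↑) ZMod.val (fun _ _ => mem_univ _) (fun x _ => mem_range.mpr x.val_lt)
    (fun _ ha => ZMod.val_cast_of_lt (mem_range.mp ha)) (fun x _ => ZMod.natCast_zmod_val x)
    (fun _ _ => rfl)

theorem Nat.Prime.dvd_sum_Ico_pow {p : ℕ} (hp : p.Prime) {i : ℕ} (hi : i < p - 1) (t q : ℕ) :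
    p ∣ ∑ a ∈ Ico t (t + q * p), a ^ i := by
  have := Fact.mk hp
  have block (t : ℕ) : p ∣ ∑ a ∈ Ico t (t + p), a ^ i := by
    rw [← ZMod.natCast_eq_zero_iff, sum_Ico_eq_sum_range, Nat.add_sub_cancel_left]
    push_cast
    rw [ZMod.sum_range_natCast (fun x => ((t : ZMod p) + x) ^ i)]
    exact (Equiv.sum_comp (Equiv.addLeft (t : ZMod p)) (· ^ i)).trans
      (FiniteField.sum_pow_lt_card_sub_one (K := ZMod p) i (by rwa [ZMod.card]))
  induction q with
  | zero => simp
  | succ q ih =>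
    rw [← sum_Ico_consecutive _ (Nat.le_add_right t (q * p)) (by nlinarith), add_mul, one_mul,
      ← add_assoc]
    exact dvd_add ih (block _)

theorem Nat.Prime.dvd_sum_Icc_pow_add_sum_Ico_pow {p : ℕ} (hp : p.Prime) {i s : ℕ} (hi0 : i ≠ 0)
    (hi : i < p - 1) (hs : s < p) : p ∣ ∑ a ∈ Icc 1 s, a ^ i + ∑ a ∈ Ico (s + 1) p, a ^ i := by
  have h := hp.dvd_sum_Ico_pow hi 0 1
  rwa [zero_add, one_mul, sum_eq_sum_Ico_succ_bot hp.pos, zero_pow hi0, zero_add,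
    ← sum_Ico_consecutive _ (Nat.le_add_left 1 s) hs, Ico_add_one_right_eq_Icc] at h

theorem Nat.Prime.dvd_sum_sum_Ico_pow {p : ℕ} (hp : p.Prime) {i : ℕ} (hi : i + 1 < p - 1) :
    p ∣ ∑ s ∈ range p, ∑ k ∈ Ico (s + 1) p, k ^ i := by
  have h := hp.dvd_sum_Ico_pow hi 0 1
  rw [zero_add, one_mul] at h
  rw [range_eq_Ico, sum_Ico_Ico_comm']
  simpa [pow_succ, mul_comm] using h

theorem prod_range_mul_eq_prod_prod {M : Type*} [CommMonoid M] (f : ℕ → M) (m n : ℕ) :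
    ∏ k ∈ range (m * n), f k = ∏ a ∈ range m, ∏ b ∈ range n, f (n * a + b) := by
  induction m with
  | zero => simp
  | succ m ih => rw [add_mul, one_mul, prod_range_add, ih, prod_range_succ, mul_comm n m]

theorem factorial_mul_eq_prod_prod (k M : ℕ) :
    (k * M)! = ∏ s ∈ range k, ∏ q ∈ range M, (M * s + q + 1) := by
  rw [factorial_eq_prod_range_add_one, prod_range_mul_eq_prod_prod]

theorem prod_factorial_mul_pow_eq {R : Type*} [CommSemiring R] (M p i : ℕ) :
    ∏ k ∈ Icc 1 (p - 1), ((M * k)! : R) ^ (k ^ i) =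
      ∏ s ∈ range p, (∏ q ∈ range M, ((M * s + q + 1 : ℕ) : R)) ^ ∑ k ∈ Ico (s + 1) p, k ^ i := by
  simp only [mul_comm M, factorial_mul_eq_prod_prod, Nat.cast_prod]
  rw [prod_congr rfl fun k _ => (prod_pow _ _ _).symm,
    prod_comm' (t' := range p) (s' := fun s => Ico (s + 1) p)]
  · simp_rw [prod_pow_eq_pow_sum]
  · intro k s
    simp only [mem_Icc, mem_range, mem_Ico]
    omega

theorem prod_range_reflect_mul {R : Type*} [CommRing R] {M p : ℕ} (h : (M * p : R) = -1)
    (s : ℕ) : ∏ q ∈ range M, ((M * s + q + 1 : ℕ) : R) =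
      (M : R) ^ M * ∏ q ∈ range M, ((p * q + s + 1 : ℕ) : R) := by
  rw [← prod_range_reflect, ← card_range M, ← prod_const, card_range, ← prod_mul_distrib]
  refine prod_congr rfl fun q hq => ?_
  have hq : q < M := mem_range.mp hq
  rw [show M * s + (M - 1 - q) + 1 = M * s + M - q by omega, Nat.cast_sub (by nlinarith)]
  push_cast
  linear_combination (-(q : R)) * h

theorem IsCyclic.exists_pow_eq_of_pow_eq_one {G : Type*} [CommGroup G] [IsCyclic G] [Finite G]
    {M p : ℕ} (hG : Nat.card G = M * p) {x : G} (hx : x ^ M = 1) : ∃ y, y ^ p = x := by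
  have hp : p ≠ 0 := by
    rintro rfl
    exact Nat.card_pos.ne' (by simpa using hG)
  have hle : (powMonoidHom p : G →* G).range ≤ (powMonoidHom M).ker := by
    rintro _ ⟨y, rfl⟩
    simp [← pow_mul, mul_comm p, ← hG, pow_card_eq_one']
  have hcard :
      Nat.card (powMonoidHom M : G →* G).ker ≤ Nat.card (powMonoidHom p : G →* G).range := by
    rw [IsCyclic.card_powMonoidHom_range, IsCyclic.card_powMonoidHom_ker, hG,
      Nat.gcd_mul_left_left, Nat.gcd_mul_right_left, Nat.mul_div_cancel _ (Nat.pos_of_ne_zero hp)]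
  obtain ⟨y, hy⟩ := (Subgroup.eq_of_le_of_card_ge hle hcard).symm ▸ MonoidHom.mem_ker.mpr hx
  exact ⟨y, hy⟩

section PrimeModulus

variable {N M p : ℕ} [Fact N.Prime]

theorem ZMod.isPthPow_of_pow_eq_one (hNM : N = M * p + 1) {x : ZMod N} (hx : x ^ M = 1) :
    IsPthPow p x := by
  have hM : M ≠ 0 := by
    rintro rfl
    have := (Fact.out : N.Prime).two_le
    omega
  have hx0 : x ≠ 0 := by
    rintro rfl
    exact zero_ne_one ((zero_pow hM).symm.trans hx)
  have hcard : Nat.card (ZMod N)ˣ = M * p := by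
    rw [Nat.card_eq_fintype_card, ZMod.card_units, hNM, Nat.add_sub_cancel]
  obtain ⟨y, hy⟩ := IsCyclic.exists_pow_eq_of_pow_eq_one hcard
    (x := Units.mk0 x hx0) (Units.ext (by simpa using hx))
  exact ⟨y, by simpa using congrArg Units.val hy⟩

theorem ZMod.pow_pow_eq_one (hNM : N = M * p + 1) {j : ℕ} (hj0 : 0 < j) (hjN : j < N) :
    ((j : ZMod N) ^ M) ^ p = 1 := by
  have hj : (j : ZMod N) ≠ 0 := by
    rw [Ne, ZMod.natCast_eq_zero_iff]
    exact fun h => (Nat.le_of_dvd hj0 h).not_gt hjN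
  rw [← pow_mul]
  convert ZMod.pow_card_sub_one_eq_one hj using 2
  omega

theorem ZMod.pow_pow_eq_one_of_lt (hNM : N = M * p + 1) {q s : ℕ} (hq : q < M) (hs : s < p) :
    (((p * q + s + 1 : ℕ) : ZMod N) ^ M) ^ p = 1 :=
  ZMod.pow_pow_eq_one hNM (Nat.succ_pos _)
    (by have := Nat.mul_add_lt_mul_of_lt_of_lt hq hs; omega)

theorem mnum_pow_eq {i : ℕ} (hp : p.Prime) (hNM : N = M * p + 1) (hi : i < p - 1) :
    Mnum N i ^ M = ∏ s ∈ range p, ∏ q ∈ range M,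
      (((p * q + s + 1 : ℕ) : ZMod N) ^ M) ^ ∑ a ∈ Icc 1 s, a ^ i := by
  rw [Mnum, show N - 1 = M * p by omega, ← Ico_add_one_right_eq_Icc, prod_Ico_eq_prod_range,
    Nat.add_sub_cancel, prod_range_mul_eq_prod_prod, prod_comm, ← prod_pow]
  refine prod_congr rfl fun s hs => ?_
  rw [← prod_pow]
  refine prod_congr rfl fun q hq => ?_
  have hsplit : ∑ a ∈ Icc 1 (p * q + s), a ^ i =
      ∑ a ∈ Icc 1 s, a ^ i + ∑ a ∈ Ico (s + 1) (s + 1 + q * p), a ^ i := by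
    rw [← Ico_add_one_right_eq_Icc, ← Ico_add_one_right_eq_Icc,
      show p * q + s + 1 = s + 1 + q * p by ring, sum_Ico_consecutive _ (by omega) (by omega)]
  rw [prod_pow_eq_pow_sum, add_comm 1, Nat.add_sub_cancel, hsplit, pow_add, mul_pow,
    pow_right_comm _ _ M, pow_right_comm _ _ M, pow_eq_one_of_dvd _ (hp.dvd_sum_Ico_pow hi _ _),
    mul_one]
  exact ZMod.pow_pow_eq_one_of_lt hNM (mem_range.mp hq) (mem_range.mp hs)

theorem snum_eq {i : ℕ} (hp : p.Prime) (hNM : N = M * p + 1) (hi : i + 1 < p - 1) :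
    Snum p N i = ∏ s ∈ range p, ∏ q ∈ range M,
      ((p * q + s + 1 : ℕ) : ZMod N) ^ ∑ k ∈ Ico (s + 1) p, k ^ i := by
  have hM : (N - 1) / p = M := by rw [hNM, Nat.add_sub_cancel, Nat.mul_div_cancel _ hp.pos]
  have hM0 : 0 < M :=
    Nat.pos_of_ne_zero fun h => (Fact.out : N.Prime).ne_one (by simpa [h] using hNM)
  have hMp : (M * p : ZMod N) = -1 := by
    have : ((M * p + 1 : ℕ) : ZMod N) = 0 := by rw [← hNM, ZMod.natCast_self]
    push_cast at this
    linear_combination this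
  rw [Snum, hM, prod_factorial_mul_pow_eq]
  simp_rw [prod_range_reflect_mul hMp, mul_pow, prod_mul_distrib, prod_pow_eq_pow_sum, ← prod_pow]
  rw [pow_eq_one_of_dvd (ZMod.pow_pow_eq_one hNM hM0 (by nlinarith [hp.two_le]))
    (hp.dvd_sum_sum_Ico_pow hi), one_mul]

end PrimeModulus

theorem statement10_general (p N : ℕ) (hp : p.Prime)
    (hN : N.Prime) (hNmod : N % p = 1)
    (i : ℕ) (hi1 : 1 ≤ i) (hi2 : i ≤ p - 4) :
    IsPthPow p (Mnum N i * Snum p N i) := by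
  have := Fact.mk hN
  obtain ⟨M, hNM⟩ : ∃ M, N = M * p + 1 := ⟨N / p, by rw [← hNmod, Nat.div_add_mod']⟩
  apply ZMod.isPthPow_of_pow_eq_one hNM
  rw [mul_pow, mnum_pow_eq hp hNM (by omega), snum_eq hp hNM (by omega), ← prod_pow,
    ← prod_mul_distrib]
  refine prod_eq_one fun s hs => ?_
  rw [← prod_pow, ← prod_mul_distrib]
  refine prod_eq_one fun q hq => ?_
  rw [pow_right_comm _ _ M, ← pow_add]
  exact pow_eq_one_of_dvd (ZMod.pow_pow_eq_one_of_lt hNM (mem_range.mp hq) (mem_range.mp hs))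
    (hp.dvd_sum_Icc_pow_add_sum_Ico_pow (by omega) (by omega) (mem_range.mp hs))

/-- For primes `p` odd and `N ≡ 1 (mod p)` and odd `1 ≤ i ≤ p - 4`, the product
`M_i · S_i` is a `p`-th power in `𝔽_N^×`; i.e. `S_i⁻¹ = M_i` modulo `p`-th powers. -/
theorem statement10 (p N : ℕ) (hp : p.Prime) (hpodd : Odd p)
    (hN : N.Prime) (hNmod : N % p = 1)
    (i : ℕ) (hi : Odd i) (hi1 : 1 ≤ i) (hi2 : i ≤ p - 4) :
    IsPthPow p (Mnum N i * Snum p N i) :=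
  statement10_general p N hp hN hNmod i hi1 hi2
end

section
/- Let p and N be primes with p odd and N ≡ 1 (mod p), and let m be an integer with 0 < m < p−1. Then in the group 𝔽_N^× one has A_m = y^p · ∏_{j=1}^{m−1} S_j^{(−1)^j · C(m,j)} for some y ∈ 𝔽_N^×, where C(m,j) denotes the binomial coefficient; that is, A_m ≡ ∏_{j=1}^{m−1} S_j^{(−1)^j C(m,j)} modulo p-th powers in 𝔽_N^×. -/
open scoped TensorProduct

/-!
Modulo `p`-th powers only the exponents `c ^ m` modulo `p` matter. Write `N - 1 = p M` and
`c = p s + (p - u)` with `u < p`, `s < M`; then `c ≡ -u (mod p)` and, as `p M = -1` in `𝔽_N`,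
`c = p (M u + s + 1)`. So the factors with `c ≡ -u` contribute
`(p ^ M (M (u + 1))! / (M u)!) ^ ((-u) ^ m)`, and the total power of `p` is a `p`-th power
because `∑_{u < p} u ^ m ≡ 0 (mod p)` for `m < p - 1`. Abel summation turns the factorial
quotients into `((N - 1)!) ^ (…) = ±1` times `∏_k ((M k)!) ^ ((1 - k) ^ m - (-k) ^ m)`, and
expanding `(1 - k) ^ m - (-k) ^ m` binomially gives `S_0 · ∏_{j ≥ 1} S_j ^ ((-1) ^ j C(m, j))`.
Finally `S_0 = ±1`: by Wilson's theorem `(M k)! (M (p - k))! = (M k)! (N - 1 - M k)! = -1`,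
as `M` is even.
-/

open Finset
open scoped Nat

section GroupWithZero

variable {G₀ : Type*} [CommGroupWithZero G₀]

def EqUpToPow (n : ℕ) (x y : G₀) : Prop :=
  ∃ z, z ≠ 0 ∧ x = z ^ n * y

namespace EqUpToPow

variable {n : ℕ} {x y w x' y' : G₀}

@[refl]
theorem refl (x : G₀) : EqUpToPow n x x :=
  ⟨1, one_ne_zero, by rw [one_pow, one_mul]⟩

theorem trans (h₁ : EqUpToPow n x y) (h₂ : EqUpToPow n y w) : EqUpToPow n x w := by
  obtain ⟨a, ha, rfl⟩ := h₁
  obtain ⟨b, hb, rfl⟩ := h₂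
  exact ⟨a * b, mul_ne_zero ha hb, by rw [mul_pow, mul_assoc]⟩

theorem mul (h : EqUpToPow n x y) (h' : EqUpToPow n x' y') :
    EqUpToPow n (x * x') (y * y') := by
  obtain ⟨a, ha, rfl⟩ := h
  obtain ⟨b, hb, rfl⟩ := h'
  exact ⟨a * b, mul_ne_zero ha hb, by rw [mul_pow, mul_mul_mul_comm]⟩

theorem zpow (h : EqUpToPow n x y) (k : ℤ) : EqUpToPow n (x ^ k) (y ^ k) := by
  obtain ⟨a, ha, rfl⟩ := h
  refine ⟨a ^ k, zpow_ne_zero k ha, ?_⟩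
  rw [mul_zpow, ← zpow_natCast, ← zpow_natCast, ← zpow_mul, ← zpow_mul, mul_comm (n : ℤ) k]

theorem prod {ι : Type*} {s : Finset ι} {f g : ι → G₀}
    (h : ∀ i ∈ s, EqUpToPow n (f i) (g i)) : EqUpToPow n (∏ i ∈ s, f i) (∏ i ∈ s, g i) := by
  classical
  induction s using Finset.induction_on with
  | empty => exact refl 1
  | insert i s hi ih =>
    rw [prod_insert hi, prod_insert hi]
    exact (h i (mem_insert_self i s)).mul (ih fun j hj => h j (mem_insert_of_mem hj))

theorem zpow_congr {a b : ℤ} (hx : x ≠ 0) (h : a ≡ b [ZMOD n]) :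
    EqUpToPow n (x ^ a) (x ^ b) := by
  obtain ⟨c, hc⟩ := h.symm.dvd
  refine ⟨x ^ c, zpow_ne_zero c hx, ?_⟩
  rw [← zpow_natCast, ← zpow_mul, ← zpow_add₀ hx]
  congr 1
  linear_combination hc

theorem neg_one {K : Type*} [Field K] (hn : Odd n) : EqUpToPow n (-1 : K) 1 :=
  ⟨-1, neg_ne_zero.mpr one_ne_zero, by rw [hn.neg_one_pow, mul_one]⟩

end EqUpToPow

theorem zpow_sum₀ {ι : Type*} {x : G₀} (hx : x ≠ 0) (s : Finset ι) (f : ι → ℤ) :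
    x ^ (∑ i ∈ s, f i) = ∏ i ∈ s, x ^ f i := by
  classical
  induction s using Finset.induction_on with
  | empty => simp
  | insert i s hi ih => rw [sum_insert hi, prod_insert hi, zpow_add₀ hx, ih]

theorem prod_zpow_sum_eq_prod_prod_zpow {ι κ : Type*} {s : Finset ι} (t : Finset κ)
    {f : ι → G₀} (hf : ∀ i ∈ s, f i ≠ 0) (g : ι → κ → ℤ) (c : κ → ℤ) :
    ∏ i ∈ s, f i ^ (∑ j ∈ t, g i j * c j) = ∏ j ∈ t, (∏ i ∈ s, f i ^ g i j) ^ c j := by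
  simp_rw [← prod_zpow, ← zpow_mul]
  rw [prod_comm]
  exact prod_congr rfl fun i hi => zpow_sum₀ (hf i hi) _ _

theorem prod_range_div_zpow {f : ℕ → G₀} (e : ℕ → ℤ) (n : ℕ)
    (hf : ∀ k ∈ range n, f (k + 1) ≠ 0) :
    ∏ u ∈ range (n + 1), (f (u + 1) / f u) ^ e u =
      f (n + 1) ^ e n / f 0 ^ e 0 * ∏ k ∈ range n, f (k + 1) ^ (e k - e (k + 1)) := by
  have hsub : ∏ k ∈ range n, f (k + 1) ^ (e k - e (k + 1)) =
      (∏ k ∈ range n, f (k + 1) ^ e k) / ∏ k ∈ range n, f (k + 1) ^ e (k + 1) := by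
    rw [← prod_div_distrib]
    exact prod_congr rfl fun k hk => zpow_sub₀ (hf k hk) _ _
  simp_rw [div_zpow, prod_div_distrib]
  rw [prod_range_succ, prod_range_succ' (fun u => f u ^ e u), hsub, mul_div_mul_comm, mul_comm]

end GroupWithZero

theorem prod_Icc_one_eq_prod_range {M : Type*} [CommMonoid M] (f : ℕ → M) (n : ℕ) :
    ∏ k ∈ Icc 1 n, f k = ∏ i ∈ range n, f (i + 1) := by
  rw [range_eq_Ico, prod_Ico_add' f 0 n 1]
  rfl

theorem prod_Icc_one_mul_eq_prod_prod {M : Type*} [CommMonoid M] (f : ℕ → M) (a b : ℕ) :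
    ∏ c ∈ Icc 1 (a * b), f c = ∏ s ∈ range a, ∏ u ∈ range b, f (b * s + (b - u)) := by
  rw [prod_Icc_one_eq_prod_range]
  induction a with
  | zero => simp
  | succ a ih =>
    rw [Nat.succ_mul, prod_range_add, ih, prod_range_succ,
      ← prod_range_reflect (fun u => f (b * a + (b - u))) b]
    congr 1
    refine prod_congr rfl fun u hu => ?_
    have := mem_range.mp hu
    congr 1
    rw [mul_comm]
    omega

theorem add_one_pow_sub_pow {R : Type*} [CommRing R] (x : R) (m : ℕ) :
    (x + 1) ^ m - x ^ m = ∑ j ∈ range m, x ^ j * m.choose j := by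
  rw [add_pow, sum_range_succ]
  simp

theorem Nat.Prime.intCast_dvd_sum_range_pow {p m : ℕ} (hp : p.Prime) (hm : m < p - 1) :
    (p : ℤ) ∣ ∑ u ∈ range p, (u : ℤ) ^ m := by
  have := Fact.mk hp
  rw [← ZMod.intCast_zmod_eq_zero_iff_dvd]
  push_cast
  obtain ⟨n, rfl⟩ : ∃ n, p = n + 1 := ⟨p - 1, by have := hp.pos; omega⟩
  rw [← Fin.sum_univ_eq_sum_range (fun u => (u : ZMod (n + 1)) ^ m)]
  refine (Fintype.sum_equiv (ZMod.finEquiv (n + 1)).toEquiv _ (· ^ m) fun i => ?_).trans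
    (FiniteField.sum_pow_lt_card_sub_one (ZMod (n + 1)) m (by rwa [ZMod.card]))
  exact congrArg (· ^ m) (ZMod.natCast_zmod_val (n := n + 1) i)

theorem natCast_prod_range_add_succ {K : Type*} [Field K] {a : ℕ} (ha : (a ! : K) ≠ 0)
    (M : ℕ) : ∏ s ∈ range M, ((a + s + 1 : ℕ) : K) = ((a + M)! : K) / a ! := by
  rw [eq_div_iff ha, ← Nat.factorial_mul_ascFactorial, Nat.ascFactorial_eq_prod_range]
  push_cast
  rw [mul_comm]
  simp only [add_right_comm]

theorem natCast_mul_eq_neg_one {N p M : ℕ} (hN : p * M + 1 = N) : (p : ZMod N) * M = -1 := by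
  have h := congrArg (Nat.cast : ℕ → ZMod N) hN
  push_cast at h
  rw [ZMod.natCast_self] at h
  linear_combination h

namespace ZMod

theorem natCast_ne_zero_of_lt {N k : ℕ} (hk0 : 0 < k) (hk : k < N) : (k : ZMod N) ≠ 0 := by
  rw [Ne, natCast_eq_zero_iff]
  exact Nat.not_dvd_of_pos_of_lt hk0 hk

variable {N : ℕ} [Fact N.Prime]
theorem natCast_factorial_ne_zero {k : ℕ} (hk : k < N) : (k ! : ZMod N) ≠ 0 := by
  rw [Ne, natCast_eq_zero_iff, (Fact.out : N.Prime).dvd_factorial]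
  omega

theorem factorial_mul_factorial_sub {a : ℕ} (ha : a < N) :
    (a ! : ZMod N) * (N - 1 - a)! = (-1) ^ (a + 1) := by
  have hdesc : ((N - 1).descFactorial a : ZMod N) = (-1) ^ a * a ! := by
    rw [Nat.descFactorial_eq_prod_range, ← prod_range_add_one_eq_factorial, Nat.cast_prod,
      Nat.cast_prod, pow_eq_prod_const, ← prod_mul_distrib]
    refine prod_congr rfl fun i hi => ?_
    have hsum : ((N - 1 - i : ℕ) : ZMod N) + (i + 1 : ℕ) = 0 := by
      rw [← Nat.cast_add, show N - 1 - i + (i + 1) = N by have := mem_range.mp hi; omega,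
        natCast_self]
    push_cast at hsum ⊢
    linear_combination hsum
  have hwilson := wilsons_lemma (p := N)
  rw [← Nat.factorial_mul_descFactorial (show a ≤ N - 1 by omega), Nat.cast_mul, hdesc]
    at hwilson
  have hsq : ((-1 : ZMod N) ^ a) ^ 2 = 1 := by rw [← pow_mul, pow_mul', neg_one_sq, one_pow]
  linear_combination (-1 : ZMod N) ^ a * hwilson - (a ! * (N - 1 - a)! : ZMod N) * hsq

end ZMod

section PrimeField

variable {N : ℕ} [Fact N.Prime] {p M : ℕ}

theorem snum_eq_prod_range (hN : p * M + 1 = N) (j : ℕ) :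
    Snum p N j = ∏ k ∈ range (p - 1), ((M * (k + 1))! : ZMod N) ^ (((k + 1 : ℕ) : ℤ) ^ j) := by
  have hp : p ≠ 0 := by
    rintro rfl
    exact (Fact.out : N.Prime).one_lt.ne' (by omega)
  rw [Snum, show (N - 1) / p = M by rw [← hN, Nat.add_sub_cancel, Nat.mul_div_cancel_left M
    (Nat.pos_of_ne_zero hp)], prod_Icc_one_eq_prod_range]
  refine prod_congr rfl fun k _ => ?_
  rw [← zpow_natCast, Nat.cast_pow]

theorem anum_eqUpToPow_prod_blocks (hN : p * M + 1 = N) (m : ℕ) :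
    EqUpToPow p (Anum N m)
      (∏ u ∈ range p, ∏ s ∈ range M, ((p : ZMod N) * (M * u + s + 1 : ℕ)) ^ (-(u : ℤ)) ^ m) := by
  rw [Anum, show N - 1 = M * p by rw [← hN, Nat.add_sub_cancel, mul_comm],
    prod_Icc_one_mul_eq_prod_prod, prod_comm]
  refine EqUpToPow.prod fun u hu => EqUpToPow.prod fun s hs => ?_
  have hu := mem_range.mp hu
  have hs : p * s + p ≤ p * M := mul_add_one p s ▸ Nat.mul_le_mul_left p (mem_range.mp hs)
  have hc : ((p * s + (p - u) : ℕ) : ZMod N) = p * (M * u + s + 1 : ℕ) := by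
    push_cast [Nat.cast_sub hu.le]
    linear_combination (-(u : ZMod N)) * natCast_mul_eq_neg_one hN
  rw [← hc, ← zpow_natCast]
  refine EqUpToPow.zpow_congr (ZMod.natCast_ne_zero_of_lt (by omega) (by omega)) ?_
  push_cast [Nat.cast_sub hu.le]
  exact (Int.modEq_iff_dvd.mpr ⟨-(s + 1), by ring⟩).pow m

theorem prod_blocks_eqUpToPow_prod_factorial_div (hp : p.Prime) (hN : p * M + 1 = N) {m : ℕ}
    (hm : m < p - 1) :
    EqUpToPow p
      (∏ u ∈ range p, ∏ s ∈ range M, ((p : ZMod N) * (M * u + s + 1 : ℕ)) ^ (-(u : ℤ)) ^ m)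
      (∏ u ∈ range p, (((M * (u + 1))! : ZMod N) / (M * u)!) ^ (-(u : ℤ)) ^ m) := by
  have hblock : ∀ u ∈ range p, ∏ s ∈ range M, ((p : ZMod N) * (M * u + s + 1 : ℕ)) =
      p ^ M * (((M * (u + 1))! : ZMod N) / (M * u)!) := by
    intro u hu
    have hu : M * u < N := by
      have := Nat.mul_le_mul_left M (mem_range.mp hu).le
      rw [mul_comm M p] at this
      omega
    rw [prod_mul_distrib, prod_const, card_range,
      natCast_prod_range_add_succ (ZMod.natCast_factorial_ne_zero hu), mul_add_one]
  have hM : 0 < M := Nat.pos_of_ne_zero fun h => (Fact.out : N.Prime).ne_one (by simp [← hN, h])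
  have hp0 : (p : ZMod N) ^ M ≠ 0 := pow_ne_zero M (ZMod.natCast_ne_zero_of_lt hp.pos (by
    have := Nat.le_mul_of_pos_right p hM
    omega))
  have hsum : ∑ u ∈ range p, (-(u : ℤ)) ^ m ≡ 0 [ZMOD p] := by
    rw [Int.modEq_zero_iff_dvd, sum_congr rfl fun (u : ℕ) _ => neg_pow (u : ℤ) m, ← mul_sum]
    exact dvd_mul_of_dvd_right (hp.intCast_dvd_sum_range_pow hm) _
  simp_rw [prod_zpow]
  rw [prod_congr rfl fun u hu => by rw [hblock u hu]]
  simp_rw [mul_zpow, prod_mul_distrib, ← zpow_sum₀ hp0]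
  refine ((EqUpToPow.zpow_congr hp0 hsum).mul (.refl _)).trans ?_
  rw [zpow_zero, one_mul]

theorem prod_factorial_div_eqUpToPow_prod_snum (hp : Odd p) (hN : p * M + 1 = N) (m : ℕ) :
    EqUpToPow p (∏ u ∈ range p, (((M * (u + 1))! : ZMod N) / (M * u)!) ^ (-(u : ℤ)) ^ m)
      (∏ j ∈ range m, Snum p N j ^ ((-1 : ℤ) ^ j * (m.choose j))) := by
  obtain ⟨n, rfl⟩ : ∃ n, p = n + 1 := ⟨p - 1, by have := hp.pos; omega⟩
  have hF : ∀ k ∈ range n, ((M * (k + 1))! : ZMod N) ≠ 0 := fun k hk =>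
    ZMod.natCast_factorial_ne_zero (by
      have : M * (k + 1) ≤ M * n := Nat.mul_le_mul_left M (mem_range.mp hk)
      rw [← hN, add_one_mul, mul_comm n]
      omega)
  calc _ = (-1) ^ (-(n : ℤ)) ^ m * ∏ k ∈ range n, ((M * (k + 1))! : ZMod N) ^
          ∑ j ∈ range m, ((k + 1 : ℕ) : ℤ) ^ j * ((-1) ^ j * m.choose j) := by
        rw [prod_range_div_zpow (f := fun k => ((M * k)! : ZMod N)) _ n hF, mul_zero,
          Nat.factorial_zero, Nat.cast_one, one_zpow, div_one,
          show M * (n + 1) = N - 1 by rw [← hN, mul_comm, Nat.add_sub_cancel], ZMod.wilsons_lemma]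
        refine congrArg _ (prod_congr rfl fun k _ => congrArg _ ?_)
        rw [show (-(k : ℤ)) = -((k + 1 : ℕ) : ℤ) + 1 by push_cast; ring, add_one_pow_sub_pow]
        refine sum_congr rfl fun j _ => ?_
        rw [neg_pow]
        ring
    EqUpToPow (n + 1) _ (1 ^ (-(n : ℤ)) ^ m * _) := ((EqUpToPow.neg_one hp).zpow _).mul (.refl _)
    _ = _ := by
        rw [one_zpow, one_mul, prod_zpow_sum_eq_prod_prod_zpow _ hF]
        simp_rw [snum_eq_prod_range hN, Nat.add_sub_cancel]

theorem snum_zero_eqUpToPow_one (hp : Odd p) (hM : Even M) (hN : p * M + 1 = N) :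
    EqUpToPow p (Snum p N 0) 1 := by
  have hS : Snum p N 0 = ∏ k ∈ Icc 1 (p - 1), ((M * k)! : ZMod N) := by
    rw [snum_eq_prod_range hN, prod_Icc_one_eq_prod_range]
    simp
  have hreflect : ∏ k ∈ Icc 1 (p - 1), ((M * (p - k))! : ZMod N) = Snum p N 0 := by
    rw [hS]
    refine prod_nbij' (p - ·) (p - ·) ?_ ?_ ?_ ?_ fun _ _ => rfl
    all_goals intro k hk; simp only [mem_Icc] at hk ⊢; omega
  have hsq : Snum p N 0 * Snum p N 0 = 1 := by
    nth_rewrite 2 [← hreflect]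
    rw [hS, ← prod_mul_distrib, prod_congr rfl fun k hk => ?_, prod_const, Nat.card_Icc,
      Nat.add_sub_cancel, (Nat.Odd.sub_odd hp odd_one).neg_one_pow]
    have hk := mem_Icc.mp hk
    rw [show M * (p - k) = N - 1 - M * k by rw [Nat.mul_sub, ← hN, mul_comm M p]; omega,
      ZMod.factorial_mul_factorial_sub (by
        have : M * k ≤ M * p := Nat.mul_le_mul_left M (by omega)
        rw [← hN, mul_comm p]
        omega),
      pow_succ, (hM.mul_right k).neg_one_pow, one_mul]
  rcases mul_self_eq_one_iff.mp hsq with h | h <;> rw [h]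
  exact EqUpToPow.neg_one hp

end PrimeField

/-- For primes `p` odd and `N ≡ 1 (mod p)` and `0 < m < p - 1`, one has
`A_m = y^p · ∏_{j=1}^{m-1} S_j^{(-1)^j C(m,j)}` in `𝔽_N^×` for some `y ∈ 𝔽_N^×`. -/
theorem statement11 (p N : ℕ) (hp : p.Prime) (hpodd : Odd p)
    [hNp : Fact N.Prime] (hNmod : N % p = 1)
    (m : ℕ) (hm0 : 0 < m) (hm1 : m < p - 1) :
    ∃ y : ZMod N, y ≠ 0 ∧
      Anum N m = y ^ p *
        ∏ j ∈ Finset.Icc 1 (m - 1), Snum p N j ^ ((-1 : ℤ) ^ j * (m.choose j)) := by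
  obtain ⟨M, hN⟩ : ∃ M, p * M + 1 = N := ⟨N / p, hNmod ▸ Nat.div_add_mod N p⟩
  have hM : Even M := by
    by_contra hM
    have h2 : N = 2 := hNp.out.even_iff.mp (hN ▸ (hpodd.mul (Nat.not_even_iff_odd.mp hM)).add_one)
    exact hp.one_lt.ne' (Nat.eq_one_of_mul_eq_one_right (show p * M = 1 by omega))
  obtain ⟨m, rfl⟩ : ∃ m', m = m' + 1 := ⟨m - 1, by omega⟩
  have h := ((anum_eqUpToPow_prod_blocks hN _).trans
    (prod_blocks_eqUpToPow_prod_factorial_div hp hN hm1)).trans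
      (prod_factorial_div_eqUpToPow_prod_snum hpodd hN _)
  rw [prod_range_succ'] at h
  refine (h.trans ((EqUpToPow.refl _).mul ((snum_zero_eqUpToPow_one hpodd hM hN).zpow _))).trans ?_
  rw [one_zpow, mul_one, Nat.add_sub_cancel, prod_Icc_one_eq_prod_range]
end

section
/- Let p and N be primes with p odd and N ≡ 1 (mod p), and let i be an even nonnegative integer. Then S_i is a p-th power in 𝔽_N^×. -/
open scoped TensorProduct

/-!
Write `a k = (M k)!` and `S = ∏ a k ^ (k ^ i)`. Wilson's theorem gives the reflection formula
`(N - 1 - m)! * m! = ± 1` in `𝔽_N`, so `a k * a (p - k) = ± 1`, a `p`-th power since `p` is odd.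
Because `i` is even, `(p - k) ^ i ≡ k ^ i [MOD p]`, so up to `p`-th powers `S` is unchanged when
`a k` is replaced by `a (p - k)`; hence `S ^ 2 ≡ ∏ (a k * a (p - k)) ^ (k ^ i)` is a `p`-th power,
and so is `S`, as `p` is odd.
-/

open Finset
open scoped Nat

theorem prod_Icc_one_reflect {M : Type*} [CommMonoid M] (f : ℕ → M) (n : ℕ) :
    ∏ k ∈ Icc 1 (n - 1), f (n - k) = ∏ k ∈ Icc 1 (n - 1), f k := by
  refine prod_nbij' (n - ·) (n - ·) ?_ ?_ ?_ ?_ ?_ <;> intro k hk <;>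
    simp only [mem_Icc] at hk ⊢ <;> omega

theorem Even.sub_pow_modEq {i : ℕ} (hi : Even i) {p k : ℕ} (hk : k ≤ p) :
    (p - k) ^ i ≡ k ^ i [MOD p] := by
  rw [← ZMod.natCast_eq_natCast_iff]
  push_cast [Nat.cast_sub hk]
  rw [ZMod.natCast_self, zero_sub, hi.neg_pow]

theorem ZMod.factorial_sub_mul_factorial_mul_neg_one_pow {n m : ℕ} (hm : m ≤ n - 1) :
    ((n - 1 - m)! * m ! * (-1) ^ m : ZMod n) = (n - 1)! := by
  induction m with
  | zero => simp
  | succ m ih =>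
    have hsucc : ((n - 1 - (m + 1) + 1 : ℕ) : ZMod n) = -((m + 1 : ℕ) : ZMod n) := by
      rw [show n - 1 - (m + 1) + 1 = n - (m + 1) by omega, Nat.cast_sub (by omega),
        ZMod.natCast_self, zero_sub]
    rw [← ih (by omega), show n - 1 - m = n - 1 - (m + 1) + 1 by omega, Nat.factorial_succ,
      Nat.factorial_succ, Nat.cast_mul, Nat.cast_mul, hsucc]
    ring

theorem ZMod.factorial_sub_mul_factorial {N m : ℕ} [Fact N.Prime] (hm : m ≤ N - 1) :
    ((N - 1 - m)! * m ! : ZMod N) = (-1) ^ (m + 1) := by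
  have h := ZMod.factorial_sub_mul_factorial_mul_neg_one_pow hm
  rw [ZMod.wilsons_lemma] at h
  have hsq : ((-1 : ZMod N) ^ m) ^ 2 = 1 := by rw [pow_right_comm, neg_one_sq, one_pow]
  linear_combination (-1 : ZMod N) ^ m * h - ((N - 1 - m)! * m ! : ZMod N) * hsq

section PthPowers

variable {K : Type*} [CommGroupWithZero K] {p : ℕ}

theorem inv_mem_mrange_powMonoidHom {x : K} (hx : x ∈ MonoidHom.mrange (powMonoidHom p)) :
    x⁻¹ ∈ MonoidHom.mrange (powMonoidHom p) := by
  obtain ⟨y, rfl⟩ := hx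
  exact ⟨y⁻¹, by simp [inv_pow]⟩

theorem mem_mrange_powMonoidHom_of_sq_mem (hp : Odd p) {x : K}
    (hx : x ^ 2 ∈ MonoidHom.mrange (powMonoidHom p)) : x ∈ MonoidHom.mrange (powMonoidHom p) := by
  obtain ⟨j, rfl⟩ := hp
  rcases eq_or_ne x 0 with rfl | hx0
  · exact ⟨0, by simp⟩
  have hxp : x ^ (2 * j + 1) ∈ MonoidHom.mrange (powMonoidHom (2 * j + 1)) := ⟨x, rfl⟩
  have hx_eq : x = (x ^ 2) ^ (j + 1) * (x ^ (2 * j + 1))⁻¹ := by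
    rw [← pow_mul, show 2 * (j + 1) = 2 * j + 1 + 1 by ring, pow_succ',
      mul_inv_cancel_right₀ (pow_ne_zero _ hx0)]
  rw [hx_eq]
  exact mul_mem (pow_mem hx _) (inv_mem_mrange_powMonoidHom hxp)

theorem prod_pow_mem_mrange_powMonoidHom_of_reflect (hp : Odd p) (a : ℕ → K) (e : ℕ → ℕ)
    (ha : ∀ k ∈ Icc 1 (p - 1), a k ≠ 0)
    (hrefl : ∀ k ∈ Icc 1 (p - 1), a k * a (p - k) ∈ MonoidHom.mrange (powMonoidHom p))
    (he : ∀ k ∈ Icc 1 (p - 1), e (p - k) ≡ e k [MOD p]) :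
    ∏ k ∈ Icc 1 (p - 1), a k ^ e k ∈ MonoidHom.mrange (powMonoidHom p) := by
  set S := ∏ k ∈ Icc 1 (p - 1), a k ^ e k
  -- `S ^ 2 * (T * S ^ (p - 1)) = S * T * S ^ p`, and both `S * T` and `T * S ^ (p - 1)`
  -- are `p`-th powers.
  set T := ∏ k ∈ Icc 1 (p - 1), a k ^ e (p - k)
  have hS : S ≠ 0 := prod_ne_zero_iff.mpr fun k hk => pow_ne_zero _ (ha k hk)
  have hT : T ≠ 0 := prod_ne_zero_iff.mpr fun k hk => pow_ne_zero _ (ha k hk)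
  have hST : S * T ∈ MonoidHom.mrange (powMonoidHom p) := by
    have hT' : T = ∏ k ∈ Icc 1 (p - 1), a (p - k) ^ e k := by
      rw [← prod_Icc_one_reflect (fun k => a (p - k) ^ e k)]
      refine prod_congr rfl fun k hk => ?_
      rw [Nat.sub_sub_self (by simp only [mem_Icc] at hk; omega)]
    rw [hT', ← prod_mul_distrib]
    exact prod_mem fun k hk => by rw [← mul_pow]; exact pow_mem (hrefl k hk) _
  have hTS : T * S ^ (p - 1) ∈ MonoidHom.mrange (powMonoidHom p) := by
    rw [← prod_pow, ← prod_mul_distrib]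
    refine prod_mem fun k hk => ⟨a k ^ ((e (p - k) + e k * (p - 1)) / p), ?_⟩
    have hdvd : p ∣ e (p - k) + e k * (p - 1) := Nat.modEq_zero_iff_dvd.mp <|
      calc e (p - k) + e k * (p - 1) ≡ e k + e k * (p - 1) [MOD p] := (he k hk).add_right _
        _ = e k * p := by rw [add_comm, ← mul_add_one, Nat.sub_one_add_one hp.pos.ne']
        _ ≡ 0 [MOD p] := Nat.modEq_zero_iff_dvd.mpr (dvd_mul_left _ _)
    rw [powMonoidHom_apply, ← pow_mul, Nat.div_mul_cancel hdvd, ← pow_mul, ← pow_add]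
  have hS2 : S ^ 2 = S * T * S ^ p * (T * S ^ (p - 1))⁻¹ := by
    rw [eq_mul_inv_iff_mul_eq₀ (mul_ne_zero hT (pow_ne_zero _ hS))]
    obtain ⟨r, rfl⟩ : ∃ r, p = r + 1 := ⟨p - 1, (Nat.sub_add_cancel hp.pos).symm⟩
    rw [Nat.add_sub_cancel, sq, pow_succ S r]
    ac_rfl
  refine mem_mrange_powMonoidHom_of_sq_mem hp ?_
  rw [hS2]
  exact mul_mem (mul_mem hST ⟨S, rfl⟩) (inv_mem_mrange_powMonoidHom hTS)

end PthPowers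

theorem statement12_general (p N : ℕ) (hpodd : Odd p)
    (hN : N.Prime) (hNmod : N % p = 1)
    (i : ℕ) (hi : Even i) :
    IsPthPow p (Snum p N i) := by
  have : Fact N.Prime := ⟨hN⟩
  set M := (N - 1) / p
  have hMp : M * p = N - 1 := Nat.div_mul_cancel ⟨N / p, by have := Nat.mod_add_div N p; omega⟩
  have hMk : ∀ k ∈ Icc 1 (p - 1), M * k ≤ N - 1 := fun k hk => by
    simp only [mem_Icc] at hk
    exact hMp ▸ Nat.mul_le_mul_left M (by omega)
  have hreflect : ∀ k ∈ Icc 1 (p - 1),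
      ((M * k)! * (M * (p - k))! : ZMod N) = (-1) ^ (M * k + 1) := fun k hk => by
    rw [mul_comm, Nat.mul_sub, hMp]
    exact ZMod.factorial_sub_mul_factorial (hMk k hk)
  have hneg_one : (-1 : ZMod N) ∈ MonoidHom.mrange (powMonoidHom p) := ⟨-1, hpodd.neg_one_pow⟩
  refine MonoidHom.mem_mrange.mp
    (prod_pow_mem_mrange_powMonoidHom_of_reflect hpodd (fun k => ((M * k)! : ZMod N)) (· ^ i)
      (fun k hk => left_ne_zero_of_mul <| hreflect k hk ▸ neg_one_pow_ne_zero _)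
      (fun k hk => hreflect k hk ▸ pow_mem hneg_one _)
      (fun k hk => hi.sub_pow_modEq (by simp only [mem_Icc] at hk; omega)))

/-- For primes `p` odd and `N ≡ 1 (mod p)` and even `i ≥ 0`, the quantity `S_i` is a
`p`-th power in `𝔽_N^×`. -/
theorem statement12 (p N : ℕ) (hp : p.Prime) (hpodd : Odd p)
    (hN : N.Prime) (hNmod : N % p = 1)
    (i : ℕ) (hi : Even i) :
    IsPthPow p (Snum p N i) :=
  statement12_general p N hpodd hN hNmod i hi
end

section
/- Let p ≥ 5 and N be primes with N ≡ 1 (mod p). Then M_1 is a p-th power in 𝔽_N^× if and only if Merel's number C is a p-th power in 𝔽_N^×. -/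
/-!
Let `V = 𝔽_N^× / (𝔽_N^×)^p`, an `𝔽_p`-vector space written additively, and let `ℓ k` be the
class of `k`; since `p` is odd, `ℓ (N - k) = ℓ k`. Both `[M_1]` and `[C]` are `𝔽_p`-combinations of
the `ℓ k`, and the theorem follows from the relation `3 [M_1] + 2 [C] = 0`, as `2` and `3` are
invertible mod `p`.

The relation comes from evaluating `∑_{j < N} j² ℓ j` in two ways: pairing `j` with `N - j`, and
splitting `j` into the even numbers `2k` and the odd numbers `N - 2k`, where
`ℓ (2k) = ℓ 2 + ℓ k`. The coefficient `∑ j²` of `ℓ 2` vanishes mod `p`, so modulo `p` (where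
`N ≡ 1`) the two evaluations differ by `∑_{k ≤ (N-1)/2} (6k² - 2k) ℓ k = 0`, and this same sum is
`2 (3 [M_1] + 2 [C])`.
-/

open scoped TensorProduct

open Finset

section Reindex

variable {M : Type*} [AddCommMonoid M] {N m : ℕ}

theorem sum_Icc_eq_sum_add_reflect (hN : N = 2 * m + 1) (f : ℕ → M) :
    ∑ j ∈ Icc 1 (N - 1), f j = ∑ k ∈ Icc 1 m, (f k + f (N - k)) := by
  have hsplit : Icc 1 (N - 1) = Icc 1 m ∪ Icc (m + 1) (N - 1) := by
    ext j; simp only [mem_union, mem_Icc]; omega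
  have hdisj : Disjoint (Icc 1 m) (Icc (m + 1) (N - 1)) :=
    disjoint_left.mpr fun j hj hj' => by simp only [mem_Icc] at hj hj'; omega
  rw [hsplit, sum_union hdisj, sum_add_distrib]
  congr 1
  refine sum_nbij' (N - ·) (N - ·) ?_ ?_ ?_ ?_ ?_ <;> intro j hj <;> simp only [mem_Icc] at hj
  · simp only [mem_Icc]; omega
  · simp only [mem_Icc]; omega
  · omega
  · omega
  · rw [Nat.sub_sub_self (by omega)]

theorem sum_Icc_eq_sum_even_add_odd (hN : N = 2 * m + 1) (f : ℕ → M) :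
    ∑ j ∈ Icc 1 (N - 1), f j = ∑ k ∈ Icc 1 m, (f (2 * k) + f (N - 2 * k)) := by
  have hsplit : Icc 1 (N - 1) = (Icc 1 m).image (2 * ·) ∪ (Icc 1 m).image (N - 2 * ·) := by
    ext j
    simp only [mem_union, mem_image, mem_Icc]
    constructor
    · intro hj
      rcases Nat.even_or_odd j with ⟨t, ht⟩ | ⟨t, ht⟩
      · exact Or.inl ⟨t, by omega, by omega⟩
      · exact Or.inr ⟨(N - j) / 2, by omega, by omega⟩
    · rintro (⟨k, hk, rfl⟩ | ⟨k, hk, rfl⟩) <;> omega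
  have hdisj : Disjoint ((Icc 1 m).image (2 * ·)) ((Icc 1 m).image (N - 2 * ·)) := by
    refine disjoint_left.mpr fun j hj hj' => ?_
    simp only [mem_image, mem_Icc] at hj hj'
    omega
  rw [hsplit, sum_union hdisj, sum_image, sum_image, sum_add_distrib]
  all_goals intro x hx y hy h; simp only [coe_Icc, Set.mem_Icc] at hx hy h; omega

end Reindex

theorem sum_Icc_id_mul_two (n : ℕ) : (∑ i ∈ Icc 1 n, i) * 2 = n * (n + 1) := by
  induction n with
  | zero => simp
  | succ n ih => rw [sum_Icc_succ_top (by omega), add_mul, ih]; ring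

theorem sum_Icc_sq_mul_six {R : Type*} [CommRing R] (n : ℕ) :
    (∑ i ∈ Icc 1 n, (i : R) ^ 2) * 6 = n * (n + 1) * (2 * n + 1) := by
  induction n with
  | zero => simp
  | succ n ih => rw [sum_Icc_succ_top (by omega), add_mul, ih]; push_cast; ring

section WeightedSums

variable {R A : Type*} [CommRing R] [AddCommGroup A] [Module R A] {N m : ℕ} {ℓ : ℕ → A}

theorem sum_smul_eq_sum_add_reflect (hN : N = 2 * m + 1) (hrefl : ∀ k ≤ N, ℓ (N - k) = ℓ k)
    (c : ℕ → R) :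
    ∑ j ∈ Icc 1 (N - 1), c j • ℓ j = ∑ k ∈ Icc 1 m, (c k + c (N - k)) • ℓ k := by
  rw [sum_Icc_eq_sum_add_reflect hN]
  refine sum_congr rfl fun k hk => ?_
  rw [hrefl k (by simp only [mem_Icc] at hk; omega), add_smul]

theorem sum_smul_eq_sum_even_add_odd (hN : N = 2 * m + 1) (hrefl : ∀ k ≤ N, ℓ (N - k) = ℓ k)
    (hdouble : ∀ k ∈ Icc 1 m, ℓ (2 * k) = ℓ 2 + ℓ k) (c : ℕ → R) :
    ∑ j ∈ Icc 1 (N - 1), c j • ℓ j = (∑ j ∈ Icc 1 (N - 1), c j) • ℓ 2 +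
      ∑ k ∈ Icc 1 m, (c (2 * k) + c (N - 2 * k)) • ℓ k := by
  rw [sum_Icc_eq_sum_even_add_odd hN, sum_Icc_eq_sum_even_add_odd hN, sum_smul,
    ← sum_add_distrib]
  refine sum_congr rfl fun k hk => ?_
  rw [hrefl (2 * k) (by simp only [mem_Icc] at hk; omega), hdouble k hk, ← add_smul, smul_add]

theorem sum_six_sq_sub_two_smul_eq_zero (hN : N = 2 * m + 1) (hrefl : ∀ k ≤ N, ℓ (N - k) = ℓ k)
    (hdouble : ∀ k ∈ Icc 1 m, ℓ (2 * k) = ℓ 2 + ℓ k) (hN1 : (N : R) = 1) (h6 : IsUnit (6 : R)) :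
    ∑ k ∈ Icc 1 m, (6 * (k : R) ^ 2 - 2 * k) • ℓ k = 0 := by
  have hsq : ∑ j ∈ Icc 1 (N - 1), (j : R) ^ 2 = 0 := by
    refine h6.mul_left_eq_zero.mp ?_
    rw [sum_Icc_sq_mul_six, Nat.cast_sub (by omega), hN1, Nat.cast_one, sub_self, zero_mul,
      zero_mul]
  have h := (sum_smul_eq_sum_even_add_odd hN hrefl hdouble fun j => (j : R) ^ 2).symm.trans
    (sum_smul_eq_sum_add_reflect hN hrefl fun j => (j : R) ^ 2)
  rw [hsq, zero_smul, zero_add, ← sub_eq_zero, ← sum_sub_distrib] at h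
  rw [← h]
  refine sum_congr rfl fun k hk => ?_
  simp only [mem_Icc] at hk
  rw [← sub_smul]
  congr 1
  push_cast [Nat.cast_sub (show k ≤ N by omega), Nat.cast_sub (show 2 * k ≤ N by omega), hN1]
  ring

theorem three_smul_sum_add_four_smul_sum_eq_zero (hN : N = 2 * m + 1)
    (hrefl : ∀ k ≤ N, ℓ (N - k) = ℓ k) (hdouble : ∀ k ∈ Icc 1 m, ℓ (2 * k) = ℓ 2 + ℓ k)
    (hN1 : (N : R) = 1) (h6 : IsUnit (6 : R)) :
    (3 : R) • ∑ j ∈ Icc 1 (N - 1), ((j : R) ^ 2 - j) • ℓ j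
      + (4 : R) • ∑ k ∈ Icc 1 m, (k : R) • ℓ k = 0 := by
  rw [sum_smul_eq_sum_add_reflect hN hrefl, smul_sum, smul_sum, ← sum_add_distrib,
    ← sum_six_sq_sub_two_smul_eq_zero hN hrefl hdouble hN1 h6]
  refine sum_congr rfl fun k hk => ?_
  simp only [mem_Icc] at hk
  rw [smul_smul, smul_smul, ← add_smul]
  congr 1
  push_cast [Nat.cast_sub (show k ≤ N by omega), hN1]
  ring

end WeightedSums

section ModPowers

abbrev ModPowers (G : Type*) [CommGroup G] (p : ℕ) : Type _ :=
  Additive (G ⧸ (powMonoidHom p : G →* G).range)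

noncomputable instance (G : Type*) [CommGroup G] (p : ℕ) : Module (ZMod p) (ModPowers G p) :=
  AddCommGroup.zmodModule fun x => by
    induction x using QuotientGroup.induction_on with
    | H g => exact (QuotientGroup.eq_one_iff _).mpr ⟨g, rfl⟩

variable {K : Type*} [Field K]

open Classical in
noncomputable def powClass (p : ℕ) (x : K) : ModPowers Kˣ p :=
  if hx : x = 0 then 0 else Additive.ofMul (QuotientGroup.mk (Units.mk0 x hx))

variable {p : ℕ}

theorem powClass_of_ne_zero {x : K} (hx : x ≠ 0) :
    powClass p x = Additive.ofMul (QuotientGroup.mk (Units.mk0 x hx)) := dif_neg hx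

theorem powClass_mul {x y : K} (hx : x ≠ 0) (hy : y ≠ 0) :
    powClass p (x * y) = powClass p x + powClass p y := by
  rw [powClass_of_ne_zero (mul_ne_zero hx hy), powClass_of_ne_zero hx, powClass_of_ne_zero hy,
    Units.mk0_mul, QuotientGroup.mk_mul, ofMul_mul]

theorem powClass_pow {x : K} (hx : x ≠ 0) (n : ℕ) : powClass p (x ^ n) = n • powClass p x := by
  rw [powClass_of_ne_zero (pow_ne_zero n hx), powClass_of_ne_zero hx, ← ofMul_pow,
    ← QuotientGroup.mk_pow]
  congr 2
  ext
  simp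

theorem powClass_prod {ι : Type*} {s : Finset ι} {f : ι → K} (hf : ∀ i ∈ s, f i ≠ 0) :
    powClass p (∏ i ∈ s, f i) = ∑ i ∈ s, powClass p (f i) := by
  classical
  induction s using Finset.induction_on with
  | empty => simp [powClass_of_ne_zero one_ne_zero]
  | insert i s hi ih =>
    rw [prod_insert hi, sum_insert hi, powClass_mul (hf i (mem_insert_self i s))
      (prod_ne_zero_iff.mpr fun j hj => hf j (mem_insert_of_mem hj)),
      ih fun j hj => hf j (mem_insert_of_mem hj)]

theorem powClass_eq_zero_iff (hp : p ≠ 0) {x : K} (hx : x ≠ 0) :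
    powClass p x = 0 ↔ ∃ y : K, y ^ p = x := by
  rw [powClass_of_ne_zero hx, ← ofMul_one, Additive.ofMul.apply_eq_iff_eq,
    QuotientGroup.eq_one_iff, MonoidHom.mem_range]
  constructor
  · rintro ⟨u, hu⟩
    exact ⟨u, by simpa using congrArg Units.val hu⟩
  · rintro ⟨y, rfl⟩
    have hy : y ≠ 0 := fun hy => hx (by rw [hy, zero_pow hp])
    exact ⟨Units.mk0 y hy, by ext; simp⟩

theorem powClass_neg (hp : Odd p) (x : K) : powClass p (-x) = powClass p x := by
  rcases eq_or_ne x 0 with rfl | hx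
  · rw [neg_zero]
  have hneg1 : powClass p (-1 : K) = 0 :=
    (powClass_eq_zero_iff hp.pos.ne' (neg_ne_zero.mpr one_ne_zero)).mpr ⟨-1, hp.neg_one_pow⟩
  rw [neg_eq_neg_one_mul, powClass_mul (neg_ne_zero.mpr one_ne_zero) hx, hneg1, zero_add]

end ModPowers

theorem isUnit_natCast_of_pos_of_lt {p n : ℕ} [Fact p.Prime] (h0 : 0 < n) (hn : n < p) :
    IsUnit (n : ZMod p) :=
  Ne.isUnit fun h => absurd ((ZMod.natCast_eq_zero_iff n p).mp h) (Nat.not_dvd_of_pos_of_lt h0 hn)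

theorem eq_zero_iff_of_smul_add_smul_eq_zero {R M : Type*} [Ring R] [AddCommGroup M] [Module R M]
    {a b : R} {x y : M} (ha : IsUnit a) (hb : IsUnit b) (h : a • x + b • y = 0) :
    x = 0 ↔ y = 0 := by
  constructor
  · rintro rfl
    rwa [smul_zero, zero_add, hb.smul_eq_zero] at h
  · rintro rfl
    rwa [smul_zero, add_zero, ha.smul_eq_zero] at h

section MerelNumbers

variable {N : ℕ}

theorem natCast_ne_zero_of_mem_Icc {k : ℕ} (hk : k ∈ Icc 1 (N - 1)) : (k : ZMod N) ≠ 0 := by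
  simp only [mem_Icc] at hk
  exact fun h =>
    Nat.not_dvd_of_pos_of_lt (by omega) (by omega) ((ZMod.natCast_eq_zero_iff k N).mp h)

variable [Fact N.Prime] {p : ℕ}

theorem powClass_natCast_sub (hp : Odd p) {k : ℕ} (hk : k ≤ N) :
    powClass p ((N - k : ℕ) : ZMod N) = powClass p (k : ZMod N) := by
  rw [Nat.cast_sub hk, ZMod.natCast_self, zero_sub, powClass_neg hp]

theorem Mnum_ne_zero : Mnum N 1 ≠ 0 :=
  prod_ne_zero_iff.mpr fun _ hk => prod_ne_zero_iff.mpr fun _ _ =>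
    pow_ne_zero _ (natCast_ne_zero_of_mem_Icc hk)

theorem MerelC_ne_zero : MerelC N ≠ 0 :=
  prod_ne_zero_iff.mpr fun _ hk => pow_ne_zero _ (natCast_ne_zero_of_mem_Icc (by
    simp only [mem_Icc] at hk ⊢; omega))

theorem powClass_Mnum : powClass p (Mnum N 1) =
    ∑ j ∈ Icc 1 (N - 1), (∑ a ∈ Icc 1 (j - 1), a) • powClass p (j : ZMod N) := by
  rw [Mnum, powClass_prod fun j hj => prod_ne_zero_iff.mpr fun _ _ =>
    pow_ne_zero _ (natCast_ne_zero_of_mem_Icc hj)]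
  refine sum_congr rfl fun j hj => ?_
  rw [powClass_prod fun _ _ => pow_ne_zero _ (natCast_ne_zero_of_mem_Icc hj), sum_smul]
  simp only [pow_one, powClass_pow (natCast_ne_zero_of_mem_Icc hj)]

theorem two_smul_powClass_Mnum : (2 : ZMod p) • powClass p (Mnum N 1) =
    ∑ j ∈ Icc 1 (N - 1), ((j : ZMod p) ^ 2 - j) • powClass p (j : ZMod N) := by
  rw [powClass_Mnum, smul_sum]
  refine sum_congr rfl fun j hj => ?_
  simp only [mem_Icc] at hj
  rw [← Nat.cast_smul_eq_nsmul (ZMod p), smul_smul]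
  congr 1
  have hgauss := congrArg (Nat.cast : ℕ → ZMod p) (sum_Icc_id_mul_two (j - 1))
  push_cast [Nat.cast_sub hj.1] at hgauss ⊢
  linear_combination hgauss

theorem powClass_MerelC : powClass p (MerelC N) =
    ∑ k ∈ Icc 1 ((N - 1) / 2), (k : ZMod p) • powClass p (k : ZMod N) := by
  have hk : ∀ k ∈ Icc 1 ((N - 1) / 2), (k : ZMod N) ≠ 0 := fun k hk =>
    natCast_ne_zero_of_mem_Icc (by simp only [mem_Icc] at hk ⊢; omega)
  rw [MerelC, powClass_prod fun k hk' => pow_ne_zero _ (hk k hk')]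
  exact sum_congr rfl fun k hk' => by rw [powClass_pow (hk k hk'), Nat.cast_smul_eq_nsmul]

theorem three_smul_powClass_Mnum_add_two_smul_powClass_MerelC (hp : Odd p) (hN : Odd N)
    (hNp : (N : ZMod p) = 1) (h2 : IsUnit (2 : ZMod p)) (h3 : IsUnit (3 : ZMod p)) :
    (3 : ZMod p) • powClass p (Mnum N 1) + (2 : ZMod p) • powClass p (MerelC N) = 0 := by
  obtain ⟨m, hm⟩ := hN
  have h6 : IsUnit (6 : ZMod p) := by
    simpa [show (6 : ZMod p) = 2 * 3 by norm_num] using h2.mul h3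
  have hdouble : ∀ k ∈ Icc 1 m,
      powClass p ((2 * k : ℕ) : ZMod N) = powClass p (2 : ZMod N) + powClass p (k : ZMod N) := by
    intro k hk
    simp only [mem_Icc] at hk
    have h2N : (2 : ZMod N) ≠ 0 := by
      exact_mod_cast natCast_ne_zero_of_mem_Icc (N := N) (k := 2) (by simp only [mem_Icc]; omega)
    rw [Nat.cast_mul, Nat.cast_ofNat]
    exact powClass_mul h2N (natCast_ne_zero_of_mem_Icc (by simp only [mem_Icc]; omega))
  refine h2.smul_eq_zero.mp ?_
  calc (2 : ZMod p) • ((3 : ZMod p) • powClass p (Mnum N 1) + (2 : ZMod p) • powClass p (MerelC N))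
      = (3 : ZMod p) • ((2 : ZMod p) • powClass p (Mnum N 1))
        + (4 : ZMod p) • powClass p (MerelC N) := by module
    _ = 0 := by
      rw [two_smul_powClass_Mnum, powClass_MerelC, show (N - 1) / 2 = m by omega]
      exact three_smul_sum_add_four_smul_sum_eq_zero hm (fun k => powClass_natCast_sub hp)
        hdouble hNp h6

end MerelNumbers

/-- For primes `p ≥ 5` and `N ≡ 1 (mod p)`, `M_1` is a `p`-th power in `𝔽_N^×` iff
Merel's number `C = ∏_{k=1}^{(N-1)/2} k^k` is. -/
theorem statement13 (p N : ℕ) (hp : p.Prime) (hp5 : 5 ≤ p)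
    (hN : N.Prime) (hNmod : N % p = 1) :
    IsPthPow p (Mnum N 1) ↔ IsPthPow p (MerelC N) := by
  have := Fact.mk hp
  have := Fact.mk hN
  have hNp : (N : ZMod p) = 1 := by rw [← ZMod.natCast_mod, hNmod, Nat.cast_one]
  have hNodd : Odd N := hN.odd_of_ne_two <| by
    rintro rfl
    rw [Nat.mod_eq_of_lt (by omega)] at hNmod
    omega
  have h2 : IsUnit (2 : ZMod p) := by
    exact_mod_cast isUnit_natCast_of_pos_of_lt (p := p) (n := 2) two_pos (by omega)
  have h3 : IsUnit (3 : ZMod p) := by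
    exact_mod_cast isUnit_natCast_of_pos_of_lt (p := p) (n := 3) three_pos (by omega)
  have hrel := three_smul_powClass_Mnum_add_two_smul_powClass_MerelC
    (hp.odd_of_ne_two (by omega)) hNodd hNp h2 h3
  rw [IsPthPow, IsPthPow, ← powClass_eq_zero_iff hp.ne_zero Mnum_ne_zero,
    ← powClass_eq_zero_iff hp.ne_zero MerelC_ne_zero]
  exact eq_zero_iff_of_smul_add_smul_eq_zero h3 h2 hrel
end

section
/- Let p and N be primes with p odd and N ≡ 1 (mod p), let i be odd with 1 ≤ i ≤ p−4, and let L = ℚ(ζ_{pN}) with ζ_N ∈ L a primitive N-th root of unity and ζ_p ∈ L a primitive p-th root of unity. Let η : (ℤ/Nℤ)^× → L^× be a group homomorphism all of whose values are p-th roots of unity, and set 𝒢_{−i} = ∏_{a ∈ (ℤ/pℤ)^×} g_{η^a}^{τ(a^i)}, where g_{η^r} = ∑_{k=1}^{N−1} η(k)^r ζ_N^k and τ(x) = x̃^p for the representative x̃ ∈ {1, …, p−1} of x. Then σ(𝒢_{−i}) = 𝒢_{−i} for every automorphism σ of L over ℚ with σ(ζ_p) = ζ_p; equivalently, 𝒢_{−i}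 lies in the subfield ℚ(ζ_p) of L. -/
/-- The Gauss sum `g_{η^r} = ∑_{k=1}^{N-1} η(k)^r ζ_N^k`, written as a sum over the
units of `ZMod N` (for `N` prime this is the same index set). -/
noncomputable def gaussSum' {N : ℕ} [NeZero N] {L : Type*} [Field L]
    (η : (ZMod N)ˣ →* L) (ζN : L) (r : ℕ) : L :=
  ∑ u : (ZMod N)ˣ, η u ^ r * ζN ^ ((u : ZMod N).val)

/-- `τ : (ℤ/pℤ)^× → ℤ_{>0}`, `τ(x) = x̃^p` where `x̃ ∈ {1, …, p-1}` represents `x`. -/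
def tauRep {p : ℕ} (x : (ZMod p)ˣ) : ℕ :=
  ((x : ZMod p).val) ^ p

/-- `𝒢_{-i} = ∏_{a ∈ (ℤ/pℤ)^×} g_{η^a}^{τ(a^i)}`. -/
noncomputable def Gminus (p : ℕ) [NeZero p] {N : ℕ} [NeZero N] {L : Type*} [Field L]
    (η : (ZMod N)ˣ →* L) (ζN : L) (i : ℕ) : L :=
  ∏ a : (ZMod p)ˣ, gaussSum' η ζN ((a : ZMod p).val) ^ tauRep (a ^ i)

/-! Write `σ(ζ_N) = ζ_N^c`. Since `σ` fixes the `p`-th roots of unity, reindexing the Gauss sum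
by `u ↦ c⁻¹u` gives `σ(g_{η^a}) = η(c)^{-a} g_{η^a}`, so `σ(𝒢_{-i}) = η(c)^{-S} 𝒢_{-i}` with
`S = ∑ a τ(a^i)`. As `τ(x) ≡ x (mod p)`, `S ≡ ∑ a^{i+1} (mod p)`, and this power sum over
`(ℤ/pℤ)^×` vanishes because `p - 1 ∤ i + 1`; hence `η(c)^S = 1`. -/

theorem IsPrimitiveRoot.exists_unit_map_eq_pow {N : ℕ} [NeZero N] {L : Type*} [Field L]
    {ζ : L} (hζ : IsPrimitiveRoot ζ N) (σ : L →+* L) :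
    ∃ c : (ZMod N)ˣ, σ ζ = ζ ^ (c : ZMod N).val := by
  have hσζ : IsPrimitiveRoot (σ ζ) N := hζ.map_of_injective σ.injective
  obtain ⟨k, -, hk⟩ := hζ.eq_pow_of_pow_eq_one hσζ.pow_eq_one
  have hcop : k.Coprime N := (hζ.pow_iff_coprime N.pos_of_neZero k).mp (hk ▸ hσζ)
  refine ⟨ZMod.unitOfCoprime k hcop, ?_⟩
  rw [← hk, ZMod.coe_unitOfCoprime]
  exact pow_eq_pow_of_modEq (ZMod.val_natCast N k ▸ Nat.mod_modEq k N).symm hζ.pow_eq_one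

theorem IsPrimitiveRoot.map_eq_self_of_pow_eq_one {R F : Type*} [CommRing R] [IsDomain R]
    [FunLike F R R] [MonoidHomClass F R R] {ζ : R} {p : ℕ} [NeZero p]
    (hζ : IsPrimitiveRoot ζ p) (σ : F) (hσ : σ ζ = ζ) {x : R} (hx : x ^ p = 1) : σ x = x := by
  obtain ⟨k, -, rfl⟩ := hζ.eq_pow_of_pow_eq_one hx
  rw [map_pow, hσ]

section GaussSum

variable {N : ℕ} [NeZero N] {L : Type*} [Field L] (η : (ZMod N)ˣ →* L) {ζ : L}
  (σ : L →+* L) (c : (ZMod N)ˣ)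

theorem map_gaussSum' (hζ : ζ ^ N = 1) (hση : ∀ u, σ (η u) = η u)
    (hσζ : σ ζ = ζ ^ (c : ZMod N).val) (r : ℕ) :
    σ (gaussSum' η ζ r) = η c⁻¹ ^ r * gaussSum' η ζ r := by
  simp only [gaussSum', map_sum, Finset.mul_sum]
  rw [← Equiv.sum_comp (Equiv.mulLeft c⁻¹)]
  refine Finset.sum_congr rfl fun u _ => ?_
  have hexp : ζ ^ ((c : ZMod N).val * ((c⁻¹ * u : (ZMod N)ˣ) : ZMod N).val) =
      ζ ^ (u : ZMod N).val := by
    refine pow_eq_pow_of_modEq ?_ hζ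
    rw [← ZMod.natCast_eq_natCast_iff]
    simp only [Nat.cast_mul, ZMod.natCast_zmod_val, ← Units.val_mul, mul_inv_cancel_left]
  rw [Equiv.coe_mulLeft, map_mul, map_pow, map_pow, hση, hσζ, ← pow_mul, hexp, map_mul,
    mul_pow, mul_assoc]

theorem map_Gminus (hζ : ζ ^ N = 1) (hση : ∀ u, σ (η u) = η u)
    (hσζ : σ ζ = ζ ^ (c : ZMod N).val) (p : ℕ) [NeZero p] (i : ℕ) :
    σ (Gminus p η ζ i) =
      η c⁻¹ ^ (∑ a : (ZMod p)ˣ, (a : ZMod p).val * tauRep (a ^ i)) * Gminus p η ζ i := by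
  simp only [Gminus, map_prod, map_pow, map_gaussSum' η σ c hζ hση hσζ, mul_pow, ← pow_mul,
    Finset.prod_mul_distrib, Finset.prod_pow_eq_pow_sum]

end GaussSum

theorem natCast_tauRep {p : ℕ} [Fact p.Prime] (x : (ZMod p)ˣ) :
    ((tauRep x : ℕ) : ZMod p) = x := by
  rw [tauRep, Nat.cast_pow, ZMod.natCast_val, ZMod.cast_id, ZMod.pow_card]

theorem prime_dvd_sum_val_mul_tauRep {p : ℕ} [Fact p.Prime] {i : ℕ} (hi : ¬ p - 1 ∣ i + 1) :
    p ∣ ∑ a : (ZMod p)ˣ, (a : ZMod p).val * tauRep (a ^ i) := by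
  rw [← ZMod.natCast_eq_zero_iff]
  have hpowsum := FiniteField.sum_pow_units (ZMod p) (i + 1)
  rw [ZMod.card, if_neg hi] at hpowsum
  push_cast
  simpa only [natCast_tauRep, ZMod.natCast_val, ZMod.cast_id, Units.val_pow_eq_pow_val,
    ← pow_succ'] using hpowsum

theorem statement16_general (p N : ℕ) (hp : p.Prime)
    [NeZero p] [NeZero N]
    (i : ℕ) (hi1 : 1 ≤ i) (hi2 : i ≤ p - 4)
    (L : Type*) [Field L] [Algebra ℚ L]
    (ζN ζp : L) (hζN : IsPrimitiveRoot ζN N) (hζp : IsPrimitiveRoot ζp p)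
    (η : (ZMod N)ˣ →* L) (hη : ∀ u, η u ^ p = 1) :
    ∀ σ : L ≃ₐ[ℚ] L, σ ζp = ζp →
      σ (Gminus p η ζN i) = Gminus p η ζN i := by
  intro σ hσp
  have : Fact p.Prime := ⟨hp⟩
  obtain ⟨c, hσζN⟩ := hζN.exists_unit_map_eq_pow (σ : L →+* L)
  have hση : ∀ u, σ (η u) = η u := fun u => hζp.map_eq_self_of_pow_eq_one σ hσp (hη u)
  have hexp : ¬ p - 1 ∣ i + 1 := fun h => by have := Nat.le_of_dvd i.succ_pos h; omega
  obtain ⟨m, hm⟩ := prime_dvd_sum_val_mul_tauRep hexp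
  have hmap := map_Gminus η (σ : L →+* L) c hζN.pow_eq_one hση hσζN p i
  rwa [hm, pow_mul, hη, one_pow, one_mul] at hmap

/-- `𝒢_{-i}` is fixed by every automorphism of `L = ℚ(ζ_{pN})` over `ℚ` fixing `ζ_p`;
equivalently `𝒢_{-i} ∈ ℚ(ζ_p)`. -/
theorem statement16 (p N : ℕ) (hp : p.Prime) (hpodd : Odd p) (hN : N.Prime)
    (hNmod : N % p = 1) [NeZero p] [NeZero N]
    (i : ℕ) (hiodd : Odd i) (hi1 : 1 ≤ i) (hi2 : i ≤ p - 4)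
    (L : Type*) [Field L] [Algebra ℚ L]
    [IsCyclotomicExtension {p * N} ℚ L]
    (ζN ζp : L) (hζN : IsPrimitiveRoot ζN N) (hζp : IsPrimitiveRoot ζp p)
    (η : (ZMod N)ˣ →* L) (hη : ∀ u, η u ^ p = 1) :
    ∀ σ : L ≃ₐ[ℚ] L, σ ζp = ζp →
      σ (Gminus p η ζN i) = Gminus p η ζN i :=
  statement16_general p N hp i hi1 hi2 L ζN ζp hζN hζp η hη
end
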